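/- Let φ be a smooth nonnegative function on ℝ^d for which there exist r > 0 and R > 0 with φ(x) > 0 for |x| ≤ r and φ(x) = 0 for |x| ≥ R. Then there exists a constant C, of size comparable to (sup φ / inf_{B_r(0)} φ)(R/r)^d, such that for every nonnegative ρ ∈ L¹(ℝ^d) and every y ∈ ℝ^d: ∫_{ℝ^d} φ(x−y) ρ(x)/ρ̃(x) dx ≤ C, where ρ̃(x) = ∫_{ℝ^d} φ(x−z) ρ(z) dz and the quotient ρ(x)/ρ̃(x) is interpreted as 0 when ρ(x) = 0. -/

import Mathlib

open MeasureTheory Real Filter Set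
open scoped RealInnerProductSpace ENNReal NNReal

noncomputable section

/-- Euclidean space `ℝ^d`. -/
abbrev Ed (d : ℕ) := EuclideanSpace ℝ (Fin d)

/-- Macroscopic density `ρ(x) = ∫ f(x,v) dv`. -/
def dens {d : ℕ} (f : Ed d → Ed d → ℝ) (x : Ed d) : ℝ := ∫ v, f x v

/-- First velocity moment `j(x) = ∫ v f(x,v) dv`. -/
def mom1 {d : ℕ} (f : Ed d → Ed d → ℝ) (x : Ed d) : Ed d := ∫ v, f x v • v

/-- Macroscopic velocity `u = j/ρ` where `ρ ≠ 0`, and `u = 0` where `ρ = 0`. -/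
def uvel {d : ℕ} (f : Ed d → Ed d → ℝ) (x : Ed d) : Ed d :=
  if dens f x = 0 then 0 else (dens f x)⁻¹ • mom1 f x

/-- Cucker–Smale alignment operator `L[f](x,v) = ∫∫ K(x,y) f(y,w) (w-v) dw dy`. -/
def Lop {d : ℕ} (K : Ed d → Ed d → ℝ) (f : Ed d → Ed d → ℝ) (x v : Ed d) : Ed d :=
  ∫ y, ∫ w, (K x y * f y w) • (w - v)

/-- Divergence (in the velocity variable) of a vector field on `ℝ^d`. -/
def divv {d : ℕ} (V : Ed d → Ed d) (v : Ed d) : ℝ :=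
  ∑ i, fderiv ℝ V v (EuclideanSpace.single i 1) i

/-- Laplacian of a scalar function on `ℝ^d`. -/
def lapv {d : ℕ} (g : Ed d → ℝ) (v : Ed d) : ℝ :=
  ∑ i, fderiv ℝ (fun w => fderiv ℝ g w (EuclideanSpace.single i 1)) v
      (EuclideanSpace.single i 1)

/-- Kinetic energy functional `𝓔(f) = ∫∫ (|v|²/2 + Φ(x)) f dv dx`. -/
def En {d : ℕ} (Φ : Ed d → ℝ) (f : Ed d → Ed d → ℝ) : ℝ :=
  ∫ x, ∫ v, (‖v‖ ^ 2 / 2 + Φ x) * f x v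

/-- Entropy functional `𝓕(f) = ∫∫ ((σ/β) f log f + f|v|²/2 + fΦ) dv dx`. -/
def entF {d : ℕ} (σ β : ℝ) (Φ : Ed d → ℝ) (f : Ed d → Ed d → ℝ) : ℝ :=
  ∫ x, ∫ v, (σ / β * (f x v * Real.log (f x v)) + f x v * ‖v‖ ^ 2 / 2 + f x v * Φ x)

/-- Local dissipation `D₁(f)`, with integrand interpreted as `0` where `f = 0`. -/
def D1 {d : ℕ} (σ β : ℝ) (f : Ed d → Ed d → ℝ) : ℝ :=
  (1 / 2) * ∫ x, ∫ v,
    (if f x v = 0 then 0 else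
      β / f x v * ‖(σ / β) • gradient (f x) v - f x v • (uvel f x - v)‖ ^ 2)

/-- Nonlocal alignment dissipation `D₂(f)`. -/
def D2 {d : ℕ} (K : Ed d → Ed d → ℝ) (f : Ed d → Ed d → ℝ) : ℝ :=
  (1 / 2) * ∫ x, ∫ v, ∫ y, ∫ w, K x y * f x v * f y w * ‖v - w‖ ^ 2

/-- Motsch–Tadmor velocity `ũ = (φ ⋆ j)/(φ ⋆ ρ)`, set to `0` where the denominator vanishes. -/
def utilde {d : ℕ} (φ : Ed d → ℝ) (f : Ed d → Ed d → ℝ) (x : Ed d) : Ed d :=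
  if (∫ y, φ (x - y) * dens f y) = 0 then 0
  else (∫ y, φ (x - y) * dens f y)⁻¹ • ∫ y, φ (x - y) • mom1 f y

/-- Truncation `χ_λ(u) = u 1_{|u| ≤ λ}`. -/
def chiTr {d : ℕ} (lam : ℝ) (u : Ed d) : Ed d := if ‖u‖ ≤ lam then u else 0

/-- Regularized macroscopic velocity `u_δ = j/(δ + ρ)`. -/
def udel {d : ℕ} (δ : ℝ) (f : Ed d → Ed d → ℝ) (x : Ed d) : Ed d :=
  (δ + dens f x)⁻¹ • mom1 f x

/-- Rapid decay (together with all derivatives): `f` is a Schwartz function of `(x,v)`. -/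
def RapidDecay {d : ℕ} (f : Ed d → Ed d → ℝ) : Prop :=
  ∃ F : SchwartzMap (Ed d × Ed d) ℝ, ∀ x v, f x v = F (x, v)

/-- Smooth compactly supported test function on `[0,T) × ℝ^d × ℝ^d`
(smooth and compactly supported on `ℝ × ℝ^d × ℝ^d`, vanishing for `t ≥ T`). -/
def IsTest {d : ℕ} (T : ℝ) (ψ : ℝ → Ed d → Ed d → ℝ) : Prop :=
  ContDiff ℝ (⊤ : ℕ∞) (fun q : ℝ × Ed d × Ed d => ψ q.1 q.2.1 q.2.2) ∧
  HasCompactSupport (fun q : ℝ × Ed d × Ed d => ψ q.1 q.2.1 q.2.2) ∧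
  ∀ t, T ≤ t → ∀ x v, ψ t x v = 0

/-- Lemma 5.2 / `lem:MT`: uniform bound
`∫ φ(x−y) ρ(x)/ρ̃(x) dx ≤ C` for the normalized Motsch–Tadmor kernel, where
`ρ̃ = φ ⋆ ρ`, uniformly over all nonnegative densities `ρ ∈ L¹` and all `y`. -/
theorem motsch_tadmor_kernel_bound
    (d : ℕ) (hd : 1 ≤ d)
    (φ : Ed d → ℝ) (hφsmooth : ContDiff ℝ (⊤ : ℕ∞) φ) (hφnn : ∀ x, 0 ≤ φ x)
    (r R : ℝ) (hr : 0 < r) (hR : 0 < R)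
    (hφpos : ∀ x : Ed d, ‖x‖ ≤ r → 0 < φ x)
    (hφsupp : ∀ x : Ed d, R ≤ ‖x‖ → φ x = 0) :
    ∃ C : ℝ, 0 < C ∧
      ∀ ρ : Ed d → ℝ, Measurable ρ → (∀ x, 0 ≤ ρ x) → Integrable ρ →
        ∀ y : Ed d,
          (∫ x, φ (x - y) *
            (if ρ x = 0 then 0 else ρ x / ∫ z, φ (x - z) * ρ z)) ≤ C := by
  classical


  -- maximum of φ
  obtain ⟨xM, hxMmem, hxM⟩ := (isCompact_closedBall (0 : Ed d) R).exists_isMaxOn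
    ⟨0, by simp [hR.le]⟩ hφsmooth.continuous.continuousOn
  set M := φ xM with hMdef
  have hMpos : 0 < M := lt_of_lt_of_le (hφpos 0 (by simp [hr.le]))
    (hxM (by simp [Metric.mem_closedBall, hR.le]))
  have hφleM : ∀ x, φ x ≤ M := by
    intro x
    by_cases hx : ‖x‖ ≤ R
    · exact hxM (by simpa [Metric.mem_closedBall, dist_zero_right] using hx)
    · rw [hφsupp x (not_le.mp hx).le]; exact hMpos.le
  -- minimum of φ on the small ball
  obtain ⟨xm, hxmmem, hxm⟩ := (isCompact_closedBall (0 : Ed d) r).exists_isMinOn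
    ⟨0, by simp [hr.le]⟩ hφsmooth.continuous.continuousOn
  set m := φ xm with hmdef
  have hmpos : 0 < m := hφpos xm (by simpa [Metric.mem_closedBall, dist_zero_right] using hxmmem)
  have hmle : ∀ x : Ed d, ‖x‖ ≤ r → m ≤ φ x := fun x hx =>
    hxm (by simpa [Metric.mem_closedBall, dist_zero_right] using hx)
  -- finite cover of the big Metric.ball by balls of radius r/2
  obtain ⟨t, ht⟩ := (isCompact_closedBall (0 : Ed d) R).elim_finite_subcover
    (fun c : Ed d => Metric.ball c (r / 2)) (fun c => Metric.isOpen_ball)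
    (fun x _ => mem_iUnion.mpr ⟨x, Metric.mem_ball_self (by positivity)⟩)
  refine ⟨t.card * (M / m) + 1, by positivity, ?_⟩
  intro ρ hρm hρnn hρint y
  set g : Ed d → ℝ := fun x =>
    φ (x - y) * (if ρ x = 0 then 0 else ρ x / ∫ z, φ (x - z) * ρ z) with hg
  show (∫ x, g x) ≤ t.card * (M / m) + 1
  have hgnn : ∀ x, 0 ≤ g x := by
    intro x
    apply mul_nonneg (hφnn _)
    split
    · exact le_rfl
    · exact div_nonneg (hρnn x)
        (integral_nonneg fun z => mul_nonneg (hφnn _) (hρnn z))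
  by_cases hI : Integrable g
  swap
  · rw [integral_undef hI]; positivity
  -- pointwise domination by indicators of the covering balls
  have hindnn : ∀ (c : Ed d) (x : Ed d),
      0 ≤ Set.indicator (Metric.ball (y + c) (r / 2)) g x :=
    fun c x => Set.indicator_nonneg (fun a _ => hgnn a) x
  have hcover : ∀ x, g x ≤ ∑ c ∈ t, Set.indicator (Metric.ball (y + c) (r / 2)) g x := by
    intro x
    by_cases hx : g x = 0
    · rw [hx]; exact Finset.sum_nonneg fun c _ => hindnn c x
    · have hxy : ‖x - y‖ < R := by
        by_contra h
        exact hx (by simp [hg, hφsupp _ (not_lt.mp h)])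
      obtain ⟨c, hct, hcball⟩ := mem_iUnion₂.mp
        (ht (by simpa [Metric.mem_closedBall, dist_zero_right] using hxy.le))
      have hxball : x ∈ Metric.ball (y + c) (r / 2) := by
        simp only [Metric.mem_ball, dist_eq_norm] at hcball ⊢
        rw [show x - (y + c) = x - y - c by abel]
        exact hcball
      calc g x = Set.indicator (Metric.ball (y + c) (r / 2)) g x := by
            rw [Set.indicator_of_mem hxball]
        _ ≤ ∑ c ∈ t, Set.indicator (Metric.ball (y + c) (r / 2)) g x :=
            Finset.single_le_sum (fun c _ => hindnn c x) hct
  have hindint : ∀ c ∈ t, Integrable (Set.indicator (Metric.ball (y + c) (r / 2)) g) :=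
    fun c _ => hI.indicator measurableSet_ball
  have h1 : (∫ x, g x) ≤ ∑ c ∈ t, ∫ x in Metric.ball (y + c) (r / 2), g x := by
    calc (∫ x, g x)
        ≤ ∫ x, ∑ c ∈ t, Set.indicator (Metric.ball (y + c) (r / 2)) g x :=
          integral_mono hI (integrable_finset_sum _ hindint) hcover
      _ = ∑ c ∈ t, ∫ x, Set.indicator (Metric.ball (y + c) (r / 2)) g x :=
          integral_finset_sum _ hindint
      _ = ∑ c ∈ t, ∫ x in Metric.ball (y + c) (r / 2), g x := by
          simp [integral_indicator measurableSet_ball]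
  -- the per-Metric.ball estimate
  have hball : ∀ p : Ed d, (∫ x in Metric.ball p (r / 2), g x) ≤ M / m := by
    intro p
    set B := Metric.ball p (r / 2) with hBdef
    set I := ∫ z in B, ρ z with hIdef
    have hInn : 0 ≤ I := setIntegral_nonneg measurableSet_ball fun z _ => hρnn z
    have hconv : ∀ x : Ed d, Integrable (fun z => φ (x - z) * ρ z) := by
      intro x
      apply hρint.bdd_mul (c := M)
        ((hφsmooth.continuous.comp (continuous_const.sub continuous_id)).aestronglyMeasurable)
      exact ae_of_all _ fun z => by simpa [Real.norm_of_nonneg (hφnn _)] using hφleM (x - z)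
    have hρtil : ∀ x ∈ B, m * I ≤ ∫ z, φ (x - z) * ρ z := by
      intro x hxB
      calc m * I = ∫ z in B, m * ρ z := by
            rw [integral_const_mul]
        _ ≤ ∫ z in B, φ (x - z) * ρ z := by
            apply setIntegral_mono_on (hρint.const_mul m).integrableOn
              (hconv x).integrableOn measurableSet_ball
            intro z hzB
            have hxz : ‖x - z‖ ≤ r := by
              have h1 : dist x p < r / 2 := Metric.mem_ball.mp hxB
              have h2 : dist z p < r / 2 := Metric.mem_ball.mp hzB
              have := dist_triangle x p z
              rw [dist_comm z p] at h2
              rw [← dist_eq_norm]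
              linarith
            exact mul_le_mul_of_nonneg_right (hmle _ hxz) (hρnn z)
        _ ≤ ∫ z, φ (x - z) * ρ z :=
            setIntegral_le_integral (hconv x)
              (ae_of_all _ fun z => mul_nonneg (hφnn _) (hρnn z))
    rcases hInn.eq_or_lt with hI0 | hIpos
    · -- ρ vanishes a.e. on B, hence so does g
      have hae : ρ =ᵐ[volume.restrict B] 0 :=
        (setIntegral_eq_zero_iff_of_nonneg_ae
          (ae_of_all _ fun z => hρnn z) hρint.integrableOn).mp hI0.symm
      have hgae : g =ᵐ[volume.restrict B] 0 := by
        filter_upwards [hae] with x hx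
        simp [hg, hx]
      rw [integral_congr_ae hgae]
      simp only [Pi.zero_apply, integral_zero]
      positivity
    · calc (∫ x in B, g x) ≤ ∫ x in B, (M / (m * I)) * ρ x := by
            apply setIntegral_mono_on hI.integrableOn
              (hρint.const_mul _).integrableOn measurableSet_ball
            intro x hxB
            by_cases hx0 : ρ x = 0
            · simp only [hg, hx0, if_pos, mul_zero]
              positivity
            · have h1 : m * I ≤ ∫ z, φ (x - z) * ρ z := hρtil x hxB
              have h2 : (0 : ℝ) < m * I := by positivity
              simp only [hg, if_neg hx0]
              calc φ (x - y) * (ρ x / ∫ z, φ (x - z) * ρ z)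
                  ≤ M * (ρ x / (m * I)) := by
                    gcongr <;>
                      first
                        | exact hφleM _
                        | exact h1
                        | exact hρnn x
                        | exact div_nonneg (hρnn x)
                            (integral_nonneg fun z => mul_nonneg (hφnn _) (hρnn z))
                _ = M / (m * I) * ρ x := by ring
        _ = M / (m * I) * I := by rw [integral_const_mul]
        _ = M / m := by
            field_simp
  calc (∫ x, g x) ≤ ∑ c ∈ t, ∫ x in Metric.ball (y + c) (r / 2), g x := h1
    _ ≤ ∑ c ∈ t, M / m := Finset.sum_le_sum fun c _ => hball _
    _ = t.card * (M / m) := by rw [Finset.sum_const, nsmul_eq_mul]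
    _ ≤ t.card * (M / m) + 1 := by linarith
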